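/- Consider an L-layer GIN with parameter ζ = 0 as below, on a graph with 0/1 adjacency matrix A ∈ ℝ^{n×n} of maximum degree Δ, with every weight matrix satisfying ‖W^{(ℓ)}‖_∞ ≥ 1. Let X, X' ∈ ℝ^{n×K} with ‖X_v − X'_v‖_∞ ≤ ε for every node v, and suppose that at every intermediate layer ℓ ∈ {0, …, L−1} the hidden-state rows of the two runs satisfy ‖H^{(ℓ)}_v − H'^{(ℓ)}_v‖_∞ ≤ B for all v (bounded feature space assumption). Then for every node u: ‖H^{(L)}_u − H'^{(L)}_u‖_∞ ≤ (∏_{ℓ=1}^{L} ‖W^{(ℓ)}‖_∞) · (B · L · Δ + ε). -/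

import Mathlib

/-!
Write `E ℓ v` for the difference of the two runs in row `v` of layer `ℓ`. One layer gives
`‖E (ℓ+1) u‖ ≤ ‖W⁽ˡ⁾‖_∞ (‖E ℓ u‖ + Δ B)`: the activation is 1-Lipschitz, `h ↦ hW` is
`‖W‖_∞`-Lipschitz for the `ℓ∞` norm, and aggregation adds to the node's own row at most `Δ`
neighbour rows, each of norm at most `B`. Unrolling from `‖E 0 u‖ ≤ ε`, the weights' norms
being at least `1` let the full product absorb every partial product in front of `Δ B`.
-/

open scoped BigOperators

/-- An `L`-layer GIN with parameter `ζ`: `H⁽⁰⁾ = X` and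
`H⁽ˡ⁺¹⁾ = φ⁽ˡ⁺¹⁾((A + (1+ζ)·I) H⁽ˡ⁾ W⁽ˡ⁺¹⁾)`, the activation applied entrywise. -/
noncomputable def gin {n : ℕ} (d : ℕ → ℕ) (ζ : ℝ) (φ : ℕ → ℝ → ℝ)
    (A : Matrix (Fin n) (Fin n) ℝ)
    (W : (ℓ : ℕ) → Matrix (Fin (d ℓ)) (Fin (d (ℓ + 1))) ℝ)
    (X : Matrix (Fin n) (Fin (d 0)) ℝ) : (ℓ : ℕ) → Matrix (Fin n) (Fin (d ℓ)) ℝ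
  | 0 => X
  | (ℓ + 1) =>
      ((A + (1 + ζ) • (1 : Matrix (Fin n) (Fin n) ℝ)) * gin d ζ φ A W X ℓ * W ℓ).map
        (φ (ℓ + 1))

/-- The operator norm of the map `h ↦ hW` on row vectors with respect to the `ℓ∞`
norm: the maximum absolute column sum of `W`. -/
noncomputable def opNormInf {m e : ℕ} (W : Matrix (Fin m) (Fin e) ℝ) : ℝ :=
  ⨆ j : Fin e, ∑ i : Fin m, |W i j|

lemma opNormInf_nonneg {m e : ℕ} (W : Matrix (Fin m) (Fin e) ℝ) : 0 ≤ opNormInf W :=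
  Real.iSup_nonneg fun _ => Finset.sum_nonneg fun _ _ => abs_nonneg _

lemma sum_abs_le_opNormInf {m e : ℕ} (W : Matrix (Fin m) (Fin e) ℝ) (j : Fin e) :
    ∑ i, |W i j| ≤ opNormInf W :=
  le_ciSup (Set.finite_range fun j => ∑ i, |W i j|).bddAbove j

lemma norm_vecMul_le_opNormInf_mul {m e : ℕ} (x : Fin m → ℝ) (W : Matrix (Fin m) (Fin e) ℝ) :
    ‖Matrix.vecMul x W‖ ≤ opNormInf W * ‖x‖ := by
  refine (pi_norm_le_iff_of_nonneg (mul_nonneg (opNormInf_nonneg W) (norm_nonneg x))).2 fun j => ?_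
  calc ‖Matrix.vecMul x W j‖ = |∑ i, x i * W i j| := rfl
    _ ≤ ∑ i, |x i| * |W i j| := by
        simpa only [abs_mul] using Finset.abs_sum_le_sum_abs (fun i => x i * W i j) Finset.univ
    _ ≤ ∑ i, ‖x‖ * |W i j| := by
        gcongr with i; exact norm_le_pi_norm x i
    _ ≤ opNormInf W * ‖x‖ := by
        rw [← Finset.mul_sum, mul_comm]
        exact mul_le_mul_of_nonneg_right (sum_abs_le_opNormInf W j) (norm_nonneg x)

lemma norm_comp_sub_comp_le {ι : Type*} [Fintype ι] {f : ℝ → ℝ} (hf : LipschitzWith 1 f)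
    (x y : ι → ℝ) :
    ‖f ∘ x - f ∘ y‖ ≤ ‖x - y‖ :=
  (pi_norm_le_iff_of_nonneg (norm_nonneg _)).2 fun i =>
    calc ‖f (x i) - f (y i)‖ ≤ ‖x i - y i‖ := by
          simpa [dist_eq_norm] using hf.dist_le_mul (x i) (y i)
      _ ≤ ‖x - y‖ := norm_le_pi_norm (x - y) i

lemma norm_add_smul_one_mul_apply_le {ι κ : Type*} [Fintype ι] [DecidableEq ι] [Fintype κ]
    {A : Matrix ι ι ℝ} {u : ι} (hA : ∀ v, 0 ≤ A u v) (c : ℝ) (E : Matrix ι κ ℝ) :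
    ‖((A + c • (1 : Matrix ι ι ℝ)) * E) u‖ ≤ |c| * ‖E u‖ + ∑ v, A u v * ‖E v‖ := by
  have hrow : ((A + c • (1 : Matrix ι ι ℝ)) * E) u = c • E u + ∑ v, A u v • E v := by
    rw [Matrix.add_mul, Matrix.smul_mul, Matrix.one_mul, add_comm]
    exact congrArg (c • E u + ·) (Matrix.vecMul_eq_sum (A u) E)
  calc _ ≤ ‖c • E u‖ + ∑ v, ‖A u v • E v‖ := by
        rw [hrow]; exact (norm_add_le _ _).trans (add_le_add_right (norm_sum_le _ _) _)
    _ = |c| * ‖E u‖ + ∑ v, A u v * ‖E v‖ := by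
        simp only [norm_smul, Real.norm_eq_abs, abs_of_nonneg (hA _)]

section
variable {n : ℕ} {d : ℕ → ℕ} {ζ : ℝ} {φ : ℕ → ℝ → ℝ} {A : Matrix (Fin n) (Fin n) ℝ}
  {W : (ℓ : ℕ) → Matrix (Fin (d ℓ)) (Fin (d (ℓ + 1))) ℝ} {X X' : Matrix (Fin n) (Fin (d 0)) ℝ}

lemma gin_succ_apply (ℓ : ℕ) (u : Fin n) :
    gin d ζ φ A W X (ℓ + 1) u =
      φ (ℓ + 1) ∘
        Matrix.vecMul (((A + (1 + ζ) • (1 : Matrix (Fin n) (Fin n) ℝ)) * gin d ζ φ A W X ℓ) u)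
          (W ℓ) :=
  rfl

lemma norm_gin_succ_sub_le {ℓ : ℕ} {u : Fin n} (hA : ∀ v, 0 ≤ A u v)
    (hφ : LipschitzWith 1 (φ (ℓ + 1))) :
    ‖gin d ζ φ A W X (ℓ + 1) u - gin d ζ φ A W X' (ℓ + 1) u‖ ≤
      opNormInf (W ℓ) * (|1 + ζ| * ‖gin d ζ φ A W X ℓ u - gin d ζ φ A W X' ℓ u‖ +
        ∑ v, A u v * ‖gin d ζ φ A W X ℓ v - gin d ζ φ A W X' ℓ v‖) := by
  set M : Matrix (Fin n) (Fin n) ℝ := A + (1 + ζ) • 1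
  set H := gin d ζ φ A W X ℓ
  set H' := gin d ζ φ A W X' ℓ
  rw [gin_succ_apply, gin_succ_apply]
  calc _ ≤ ‖Matrix.vecMul ((M * H) u) (W ℓ) - Matrix.vecMul ((M * H') u) (W ℓ)‖ :=
        norm_comp_sub_comp_le hφ _ _
    _ = ‖Matrix.vecMul ((M * (H - H')) u) (W ℓ)‖ := by
        rw [Matrix.mul_sub, ← Matrix.sub_vecMul]; rfl
    _ ≤ opNormInf (W ℓ) * ‖(M * (H - H')) u‖ := norm_vecMul_le_opNormInf_mul _ _
    _ ≤ _ := mul_le_mul_of_nonneg_left (norm_add_smul_one_mul_apply_le hA _ _)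
        (opNormInf_nonneg _)

end

lemma le_prod_mul_of_le_mul_add {D w : ℕ → ℝ} {c ε : ℝ} {L : ℕ} (hc : 0 ≤ c)
    (hw : ∀ ℓ < L, 1 ≤ w ℓ) (hD0 : D 0 ≤ ε) (hD : ∀ ℓ < L, D (ℓ + 1) ≤ w ℓ * (D ℓ + c)) :
    D L ≤ (∏ ℓ ∈ Finset.range L, w ℓ) * (c * L + ε) := by
  induction L with
  | zero => simpa using hD0
  | succ L ih =>
    have hP : 1 ≤ ∏ ℓ ∈ Finset.range L, w ℓ :=
      Finset.one_le_prod fun ℓ hℓ => hw ℓ (by simp at hℓ; omega)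
    have hDL := ih (fun ℓ hℓ => hw ℓ (by omega)) (fun ℓ hℓ => hD ℓ (by omega))
    have hwL : 0 ≤ w L := zero_le_one.trans (hw L L.lt_succ_self)
    calc D (L + 1) ≤ w L * (D L + c) := hD L L.lt_succ_self
      _ ≤ w L * ((∏ ℓ ∈ Finset.range L, w ℓ) * (c * L + ε) +
            (∏ ℓ ∈ Finset.range L, w ℓ) * c) := by
          gcongr; exact le_mul_of_one_le_left hc hP
      _ = (∏ ℓ ∈ Finset.range (L + 1), w ℓ) * (c * ↑(L + 1) + ε) := by
          rw [Finset.prod_range_succ]; push_cast; ring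

/-- Theorem 3 (Lipschitz core, feature attacks on GINs with `ζ = 0`): on a graph with
0/1 adjacency matrix of maximum degree `Δ`, with weight matrices of `ℓ∞` operator norm
at least `1`, if every row of the feature perturbation has `ℓ∞` norm at most `ε` and at
every intermediate layer the hidden-state rows of the two runs differ by at most `B` in
`ℓ∞` norm, then every output row differs by at most
`(∏ ℓ, ‖W⁽ˡ⁾‖_∞) · (B·L·Δ + ε)` in `ℓ∞` norm. -/
theorem gin_feature_attack_bound
    {n : ℕ} (L : ℕ) (d : ℕ → ℕ) (φ : ℕ → ℝ → ℝ)
    (A : Matrix (Fin n) (Fin n) ℝ) (hA : ∀ i j, A i j = 0 ∨ A i j = 1)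
    (Δ : ℕ) (hΔ : ∀ u : Fin n, ∑ v : Fin n, A u v ≤ (Δ : ℝ))
    (W : (ℓ : ℕ) → Matrix (Fin (d ℓ)) (Fin (d (ℓ + 1))) ℝ)
    (hφ : ∀ ℓ, LipschitzWith 1 (φ ℓ))
    (hW : ∀ ℓ < L, 1 ≤ opNormInf (W ℓ))
    (X X' : Matrix (Fin n) (Fin (d 0)) ℝ) (ε B : ℝ)
    (hX : ∀ v : Fin n, ‖X v - X' v‖ ≤ ε)
    (hB : ∀ ℓ < L, ∀ v : Fin n, ‖gin d 0 φ A W X ℓ v - gin d 0 φ A W X' ℓ v‖ ≤ B) :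
    ∀ u : Fin n,
      ‖gin d 0 φ A W X L u - gin d 0 φ A W X' L u‖ ≤
        (∏ ℓ ∈ Finset.range L, opNormInf (W ℓ)) * (B * (L : ℝ) * (Δ : ℝ) + ε) := by
  intro u
  obtain rfl | hL := Nat.eq_zero_or_pos L
  · simpa [gin] using hX u
  have hB0 : 0 ≤ B := (norm_nonneg _).trans (hB 0 hL u)
  have hA0 : ∀ v, 0 ≤ A u v := fun v => by rcases hA u v with h | h <;> simp [h]
  rw [mul_right_comm B]
  refine le_prod_mul_of_le_mul_add (D := fun ℓ => ‖gin d 0 φ A W X ℓ u - gin d 0 φ A W X' ℓ u‖)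
    (by positivity) hW (hX u) fun ℓ hℓ => ?_
  have hneighbours : ∑ v, A u v * ‖gin d 0 φ A W X ℓ v - gin d 0 φ A W X' ℓ v‖ ≤ B * Δ :=
    calc _ ≤ ∑ v, A u v * B := by gcongr with v; exacts [hA0 v, hB ℓ hℓ v]
      _ ≤ Δ * B := by rw [← Finset.sum_mul]; exact mul_le_mul_of_nonneg_right (hΔ u) hB0
      _ = B * Δ := mul_comm _ _
  calc _ ≤ opNormInf (W ℓ) * (|1 + 0| * ‖gin d 0 φ A W X ℓ u - gin d 0 φ A W X' ℓ u‖ +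
          ∑ v, A u v * ‖gin d 0 φ A W X ℓ v - gin d 0 φ A W X' ℓ v‖) :=
        norm_gin_succ_sub_le hA0 (hφ (ℓ + 1))
    _ ≤ _ := by
        rw [add_zero, abs_one, one_mul]
        exact mul_le_mul_of_nonneg_left (by gcongr) (opNormInf_nonneg (W ℓ))
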